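/- Let k be a field containing a primitive n-th root of unity, n ≥ 3, and N ≥ 2. Define I_{N,n} = C_{N,n} ∩ J_{N,n} in k[x_0,…,x_N] as for the Fermat arrangement. If F_{N−1,n} ∉ I_{N−1,n}^2, then F_{N,n} ∉ I_{N,n}^2. -/

import Mathlib

/-!
Setting the last variable to `1` sends `F_{N+1}` to `F_N · G` with `G = ∏ᵢ (xᵢⁿ - 1)`, and sends
each generator of `I_{N+1}` not involving the last variable to the corresponding generator of
`I_N`, so `F_N · G ∈ I_N²`. Since `I_N²` is homogeneous and `F_N` is homogeneous of some
degree `d`, the degree-`d` component `F_N · G(0) = ±F_N` of `F_N · G` lies in `I_N²` as well.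
-/

open MvPolynomial

noncomputable section

/-- `F_{M,n} = ∏_{0 ≤ i < j < M} (x_i^n − x_j^n)` in `k[x_0,…,x_{M-1}]`. -/
def fermatPoly (k : Type*) [Field k] (M n : ℕ) : MvPolynomial (Fin M) k :=
  ∏ p ∈ Finset.univ.filter (fun p : Fin M × Fin M => p.1 < p.2), (X p.1 ^ n - X p.2 ^ n)

/-- `C_{M,n} = ⋂_{i<j} (x_i, x_j)`. -/
def cevaC (k : Type*) [Field k] (M : ℕ) : Ideal (MvPolynomial (Fin M) k) :=
  ⨅ (i : Fin M) (j : Fin M) (_ : i < j), Ideal.span {X i, X j}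

/-- `J_{M,n} = ⋂_{i<j<l, 0≤a,b<n} (x_i − ε^a x_j, x_i − ε^b x_l)`. -/
def cevaJ (k : Type*) [Field k] (M n : ℕ) (ε : k) : Ideal (MvPolynomial (Fin M) k) :=
  ⨅ (i : Fin M) (j : Fin M) (l : Fin M) (_ : i < j) (_ : j < l) (a : Fin n) (b : Fin n),
    Ideal.span {X i - C (ε ^ (a : ℕ)) * X j, X i - C (ε ^ (b : ℕ)) * X l}

/-- `I_{M,n} = J_{M,n} ∩ C_{M,n}`. -/
def cevaI (k : Type*) [Field k] (M n : ℕ) (ε : k) : Ideal (MvPolynomial (Fin M) k) :=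
  cevaJ k M n ε ⊓ cevaC k M

/-- The evaluation homomorphism `k[x_0,…,x_N] → k[x_0,…,x_{N−1}]` sending `x_N ↦ 1` and
`x_i ↦ x_i` for `i < N`. -/
def evalLastOne (k : Type*) [Field k] (N : ℕ) :
    MvPolynomial (Fin (N + 1)) k →+* MvPolynomial (Fin N) k :=
  (aeval (fun i : Fin (N + 1) => if h : (i : ℕ) < N then (X ⟨i, h⟩ : MvPolynomial (Fin N) k)
    else 1)).toRingHom

attribute [local instance] MvPolynomial.gradedAlgebra

namespace MvPolynomial

variable {σ R : Type*} [CommSemiring R]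

theorem homogeneousComponent_mul_of_isHomogeneous {f : MvPolynomial σ R} {d : ℕ}
    (hf : f.IsHomogeneous d) (g : MvPolynomial σ R) :
    homogeneousComponent d (f * g) = f * C (constantCoeff g) := by
  have hcomp : ∀ e, homogeneousComponent d (f * homogeneousComponent e g) =
      if d = d + e then f * homogeneousComponent e g else 0 := fun e =>
    homogeneousComponent_of_mem (hf.mul (homogeneousComponent_isHomogeneous e g))
  conv_lhs => rw [← sum_homogeneousComponent g, Finset.mul_sum, map_sum]
  rw [Finset.sum_eq_single 0 (fun e _ he => by rw [hcomp, if_neg (by omega)])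
    (fun h0 => (h0 (Finset.mem_range.mpr (Nat.succ_pos _))).elim),
    hcomp, if_pos (add_zero d).symm, homogeneousComponent_zero, constantCoeff_eq]

theorem mem_of_mul_mem_of_isUnit_constantCoeff {I : Ideal (MvPolynomial σ R)}
    (hI : I.IsHomogeneous (homogeneousSubmodule σ R)) {f g : MvPolynomial σ R} {d : ℕ}
    (hf : f.IsHomogeneous d) (hg : IsUnit (constantCoeff g)) (hfg : f * g ∈ I) : f ∈ I := by
  have hmem : f * C (constantCoeff g) ∈ I := by
    rw [← homogeneousComponent_mul_of_isHomogeneous hf]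
    exact homogeneousComponent_mem_of_mem hI hfg d
  have hf_eq : f = f * C (constantCoeff g) * C (↑hg.unit⁻¹ : R) := by
    rw [mul_assoc, ← C_mul, IsUnit.mul_val_inv, C_1, mul_one]
  rw [hf_eq]
  exact I.mul_mem_right _ hmem

theorem isHomogeneous_span_pair {p q : MvPolynomial σ R} {m n : ℕ} (hp : p.IsHomogeneous m)
    (hq : q.IsHomogeneous n) :
    (Ideal.span {p, q}).IsHomogeneous (homogeneousSubmodule σ R) := by
  refine Ideal.homogeneous_span _ _ ?_
  rintro x (rfl | rfl)
  exacts [⟨m, hp⟩, ⟨n, hq⟩]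

theorem isHomogeneous_X_sub_C_mul_X {R : Type*} [CommRing R] (i j : σ) (c : R) :
    (X i - C c * X j).IsHomogeneous 1 :=
  (isHomogeneous_X R i).sub (by simpa using (isHomogeneous_C σ c).mul (isHomogeneous_X R j))

end MvPolynomial

section Fermat

variable {k : Type*} [Field k]

theorem fermatPoly_isHomogeneous (M n : ℕ) :
    (fermatPoly k M n).IsHomogeneous
      ((Finset.univ.filter fun p : Fin M × Fin M => p.1 < p.2).card * n) := by
  rw [fermatPoly]
  simpa using IsHomogeneous.prod _ _ _ fun (p : Fin M × Fin M) _ =>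
    ((isHomogeneous_X k p.1).pow n).sub ((isHomogeneous_X k p.2).pow n)

theorem cevaI_isHomogeneous (M n : ℕ) (ε : k) :
    (cevaI k M n ε).IsHomogeneous (homogeneousSubmodule (Fin M) k) := by
  refine .inf ?_ ?_
  · exact .iInf fun i => .iInf fun j => .iInf fun l => .iInf fun _ => .iInf fun _ =>
      .iInf fun a => .iInf fun b =>
        isHomogeneous_span_pair (isHomogeneous_X_sub_C_mul_X _ _ _)
          (isHomogeneous_X_sub_C_mul_X _ _ _)
  · exact .iInf fun i => .iInf fun j => .iInf fun _ =>
      isHomogeneous_span_pair (isHomogeneous_X k i) (isHomogeneous_X k j)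

variable {N : ℕ}

@[simp]
theorem evalLastOne_X_castSucc (i : Fin N) : evalLastOne k N (X i.castSucc) = X i := by
  simp [evalLastOne]

@[simp]
theorem evalLastOne_X_last : evalLastOne k N (X (Fin.last N)) = 1 := by
  simp [evalLastOne]

@[simp]
theorem evalLastOne_C (c : k) : evalLastOne k N (C c) = C c := by
  simp [evalLastOne]

theorem filter_lt_fin_succ_eq_union :
    Finset.univ.filter (fun p : Fin (N + 1) × Fin (N + 1) => p.1 < p.2) =
      (Finset.univ.filter (fun p : Fin N × Fin N => p.1 < p.2)).map
          (Fin.castSuccEmb.prodMap Fin.castSuccEmb) ∪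
        Finset.univ.map (Fin.castSuccEmb.trans (Function.Embedding.sectL _ (Fin.last N))) := by
  ext ⟨a, b⟩
  simp only [Finset.mem_filter, Finset.mem_univ, true_and, Finset.mem_union, Finset.mem_map,
    Function.Embedding.coe_prodMap, Function.Embedding.trans_apply, Function.Embedding.sectL_apply,
    Prod.exists, Prod.map, Prod.mk.injEq, Fin.coe_castSuccEmb]
  constructor
  · intro hab
    rcases Fin.eq_castSucc_or_eq_last b with ⟨j, rfl⟩ | rfl
    · obtain ⟨i, rfl⟩ := Fin.exists_castSucc_eq.mpr (hab.trans (Fin.castSucc_lt_last j)).ne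
      exact .inl ⟨i, j, Fin.castSucc_lt_castSucc_iff.mp hab, rfl, rfl⟩
    · obtain ⟨i, rfl⟩ := Fin.exists_castSucc_eq.mpr hab.ne
      exact .inr ⟨i, rfl, rfl⟩
  · rintro (⟨i, j, hij, rfl, rfl⟩ | ⟨i, rfl, rfl⟩)
    exacts [Fin.castSucc_lt_castSucc_iff.mpr hij, Fin.castSucc_lt_last i]

theorem evalLastOne_fermatPoly (n : ℕ) :
    evalLastOne k N (fermatPoly k (N + 1) n) = fermatPoly k N n * ∏ i : Fin N, (X i ^ n - 1) := by
  rw [fermatPoly, map_prod, filter_lt_fin_succ_eq_union, Finset.prod_union, Finset.prod_map,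
    Finset.prod_map]
  · simp [fermatPoly]
  · rw [Finset.disjoint_left]
    simp only [Finset.mem_map, Finset.mem_univ, true_and, not_exists]
    rintro _ ⟨p, -, rfl⟩ i h
    exact (Fin.castSucc_lt_last p.2).ne (congrArg Prod.snd h).symm

theorem map_evalLastOne_cevaJ_le (n : ℕ) (ε : k) :
    (cevaJ k (N + 1) n ε).map (evalLastOne k N) ≤ cevaJ k N n ε := by
  simp only [cevaJ, le_iInf_iff]
  intro i j l hij hjl a b
  calc _ ≤ (Ideal.span {X i.castSucc - C (ε ^ (a : ℕ)) * X j.castSucc,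
          X i.castSucc - C (ε ^ (b : ℕ)) * X l.castSucc}).map (evalLastOne k N) :=
        Ideal.map_mono fun f hf => by
          simp only [Submodule.mem_iInf] at hf
          exact hf _ _ _ (Fin.castSucc_lt_castSucc_iff.mpr hij)
            (Fin.castSucc_lt_castSucc_iff.mpr hjl) a b
    _ = _ := by simp [Ideal.map_span, Set.image_pair]

theorem map_evalLastOne_cevaC_le :
    (cevaC k (N + 1)).map (evalLastOne k N) ≤ cevaC k N := by
  simp only [cevaC, le_iInf_iff]
  intro i j hij
  calc _ ≤ (Ideal.span {X i.castSucc, X j.castSucc}).map (evalLastOne k N) :=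
        Ideal.map_mono fun f hf => by
          simp only [Submodule.mem_iInf] at hf
          exact hf _ _ (Fin.castSucc_lt_castSucc_iff.mpr hij)
    _ = _ := by simp [Ideal.map_span, Set.image_pair]

theorem map_evalLastOne_cevaI_le (n : ℕ) (ε : k) :
    (cevaI k (N + 1) n ε).map (evalLastOne k N) ≤ cevaI k N n ε :=
  (Ideal.map_inf_le _).trans
    (inf_le_inf (map_evalLastOne_cevaJ_le n ε) map_evalLastOne_cevaC_le)

theorem constantCoeff_prod_X_pow_sub_one {n : ℕ} (hn : n ≠ 0) :
    constantCoeff (∏ i : Fin N, (X i ^ n - 1 : MvPolynomial (Fin N) k)) = (-1) ^ N := by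
  simp [map_prod, zero_pow hn]

end Fermat

theorem stmt13_general {k : Type*} [Field k] {n N : ℕ} (hn : 3 ≤ n) {ε : k}
    (hprev : fermatPoly k N n ∉ (cevaI k N n ε) ^ 2) :
    fermatPoly k (N + 1) n ∉ (cevaI k (N + 1) n ε) ^ 2 := by
  intro h
  have hmul : fermatPoly k N n * ∏ i : Fin N, (X i ^ n - 1) ∈ cevaI k N n ε ^ 2 := by
    have h' := Ideal.mem_map_of_mem (evalLastOne k N) h
    rw [Ideal.map_pow, evalLastOne_fermatPoly] at h'
    exact Ideal.pow_right_mono (map_evalLastOne_cevaI_le n ε) 2 h'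
  have hsq : (cevaI k N n ε ^ 2).IsHomogeneous (homogeneousSubmodule (Fin N) k) := by
    rw [sq]
    exact (cevaI_isHomogeneous N n ε).mul (cevaI_isHomogeneous N n ε)
  refine hprev (mem_of_mul_mem_of_isUnit_constantCoeff hsq (fermatPoly_isHomogeneous N n) ?_ hmul)
  rw [constantCoeff_prod_X_pow_sub_one (by omega)]
  exact isUnit_neg_one.pow N

/-- For `n ≥ 3`, `N ≥ 2` and `ε ∈ k` a primitive `n`-th root of unity,
if `F_{N−1,n} ∉ I_{N−1,n}^2` (in `k[x_0,…,x_{N−1}]`), then `F_{N,n} ∉ I_{N,n}^2`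
(in `k[x_0,…,x_N]`). -/
theorem stmt13 {k : Type*} [Field k] {n N : ℕ} (hn : 3 ≤ n) (hN : 2 ≤ N) {ε : k}
    (hε : IsPrimitiveRoot ε n)
    (hprev : fermatPoly k N n ∉ (cevaI k N n ε) ^ 2) :
    fermatPoly k (N + 1) n ∉ (cevaI k (N + 1) n ε) ^ 2 :=
  stmt13_general hn hprev

end
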